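/- arXiv:2604.06141 — 6 statements merged into one kernel-verified Lean document; each statement's English description precedes it below -/
import Mathlib

section
/- For every positive integer n and every symmetric real n×n matrix T, the operator norm of the matrix tr(T)·T − T·T is at most (√(n−1)/2) times the square of the Frobenius norm of T, i.e. ‖tr(T)·T − T²‖ ≤ (√(n−1)/2)·|T|², where ‖·‖ denotes the ℓ²→ℓ² operator norm and |T|² = tr(T·Tᵀ). -/
/-!
Diagonalise `T = U diag(λ) U*`. Then `tr(T)·T - T² = U diag(μ) U*` with
`μᵢ = λᵢ ∑_{j ≠ i} λⱼ`, so its operator norm is `maxᵢ |μᵢ|`, while `tr(T Tᵀ) = ∑ λⱼ²`.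
Cauchy–Schwarz and AM–GM give
`|λᵢ ∑_{j ≠ i} λⱼ| ≤ √(n-1) |λᵢ| (∑_{j ≠ i} λⱼ²)^{1/2} ≤ √(n-1)/2 · ∑ⱼ λⱼ²`.
-/

open Matrix Finset
open scoped Matrix.Norms.L2Operator

theorem abs_sum_le_sqrt_card_mul_sqrt_sum_sq {ι : Type*} (s : Finset ι) (f : ι → ℝ) :
    |∑ i ∈ s, f i| ≤ √(#s : ℝ) * √(∑ i ∈ s, f i ^ 2) := by
  rw [← Real.sqrt_mul (Nat.cast_nonneg _)]
  exact Real.abs_le_sqrt sq_sum_le_card_mul_sum_sq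

theorem abs_sum_mul_sub_sq_le {ι : Type*} [Fintype ι] [DecidableEq ι] (f : ι → ℝ) (i : ι) :
    |(∑ j, f j) * f i - f i ^ 2| ≤ √((Fintype.card ι : ℝ) - 1) / 2 * ∑ j, f j ^ 2 := by
  have hi : i ∈ univ := mem_univ i
  set S := ∑ j ∈ univ.erase i, f j ^ 2
  have hS : f i ^ 2 + S = ∑ j, f j ^ 2 := add_sum_erase _ (fun j ↦ f j ^ 2) hi
  have hcard : (#(univ.erase i) : ℝ) = Fintype.card ι - 1 := by
    rw [card_erase_of_mem hi, card_univ, Nat.cast_pred (Fintype.card_pos_iff.mpr ⟨i⟩)]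
  have amgm : |f i| * √S ≤ (f i ^ 2 + S) / 2 := by
    have := two_mul_le_add_sq |f i| √S
    rw [sq_abs, Real.sq_sqrt (sum_nonneg fun j _ ↦ sq_nonneg _)] at this
    linarith
  calc |(∑ j, f j) * f i - f i ^ 2|
      = |f i| * |∑ j ∈ univ.erase i, f j| := by
        rw [← add_sum_erase univ f hi, ← abs_mul]; ring_nf
    _ ≤ |f i| * (√((Fintype.card ι : ℝ) - 1) * √S) := by
        rw [← hcard]; gcongr; exact abs_sum_le_sqrt_card_mul_sqrt_sum_sq _ _
    _ = √((Fintype.card ι : ℝ) - 1) * (|f i| * √S) := by ring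
    _ ≤ √((Fintype.card ι : ℝ) - 1) / 2 * ∑ j, f j ^ 2 := by
        rw [← hS]; nlinarith [Real.sqrt_nonneg ((Fintype.card ι : ℝ) - 1)]

theorem Unitary.norm_conjStarAlgAut {S E : Type*} [NormedRing E] [StarRing E] [CStarRing E]
    [SMul S E] [IsScalarTower S E E] [SMulCommClass S E E] (u : unitary E) (x : E) :
    ‖conjStarAlgAut S E u x‖ = ‖x‖ := by
  rw [conjStarAlgAut_apply, ← coe_star, CStarRing.norm_mul_coe_unitary,
    CStarRing.norm_coe_unitary_mul]

theorem Matrix.trace_conjStarAlgAut {n R : Type*} [Fintype n] [DecidableEq n] [CommRing R]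
    [StarRing R] (u : unitary (Matrix n n R)) (x : Matrix n n R) :
    (Unitary.conjStarAlgAut R _ u x).trace = x.trace := by
  rw [Unitary.conjStarAlgAut_apply, trace_mul_cycle, Unitary.coe_star_mul_self, one_mul]

namespace Matrix.IsHermitian

variable {𝕜 n : Type*} [RCLike 𝕜] [Fintype n] [DecidableEq n] {A : Matrix n n 𝕜}

theorem trace_mul_self (hA : A.IsHermitian) :
    (A * A).trace = ∑ i, ((hA.eigenvalues i ^ 2 : ℝ) : 𝕜) := by
  conv_lhs => rw [hA.spectral_theorem]
  rw [← map_mul, trace_conjStarAlgAut, diagonal_mul_diagonal, trace_diagonal]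
  simp [sq]

theorem trace_smul_sub_mul_self_eq (hA : A.IsHermitian) :
    A.trace • A - A * A = Unitary.conjStarAlgAut 𝕜 _ hA.eigenvectorUnitary
      (diagonal fun i ↦
        (((∑ j, hA.eigenvalues j) * hA.eigenvalues i - hA.eigenvalues i ^ 2 : ℝ) : 𝕜)) := by
  have hspec := hA.spectral_theorem
  rw [hA.trace_eq_sum_eigenvalues]
  generalize hA.eigenvalues = lam, hA.eigenvectorUnitary = U at hspec ⊢
  rw [hspec, ← map_smul, ← map_mul, ← map_sub, ← diagonal_smul, diagonal_mul_diagonal,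
    diagonal_sub]
  congr 2
  ext i
  simp [sq]

end Matrix.IsHermitian

theorem statement0_general (n : ℕ) (T : Matrix (Fin n) (Fin n) ℝ) (hT : T.IsSymm) :
    ‖Matrix.toEuclideanCLM (𝕜 := ℝ) (T.trace • T - T * T)‖ ≤
      (Real.sqrt ((n : ℝ) - 1) / 2) * (T * Tᵀ).trace := by
  have hA : T.IsHermitian := isHermitian_iff_isSymm.mpr hT
  rw [l2_opNorm_toEuclideanCLM, hA.trace_smul_sub_mul_self_eq, Unitary.norm_conjStarAlgAut,
    l2_opNorm_diagonal, hT.eq, hA.trace_mul_self]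
  refine (pi_norm_le_iff_of_nonneg (by positivity)).mpr fun i ↦ ?_
  simpa using abs_sum_mul_sub_sq_le hA.eigenvalues i

/-- For every positive integer `n` and every symmetric real `n × n`
matrix `T`, the `ℓ² → ℓ²` operator norm of `tr(T)·T − T²` is at most
`(√(n−1)/2)` times the square of the Frobenius norm of `T`, where the square of the
Frobenius norm is `tr (T * Tᵀ)`. -/
theorem statement0 (n : ℕ) (hn : 0 < n) (T : Matrix (Fin n) (Fin n) ℝ) (hT : T.IsSymm) :
    ‖Matrix.toEuclideanCLM (𝕜 := ℝ) (T.trace • T - T * T)‖ ≤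
      (Real.sqrt ((n : ℝ) - 1) / 2) * (T * Tᵀ).trace :=
  statement0_general n T hT
end

section
/- For every integer n ≥ 2 there exists a nonzero symmetric real n×n matrix T for which equality ‖tr(T)·T − T²‖ = (√(n−1)/2)·|T|² holds (for instance the diagonal matrix with entries (−√(n−1), 1, …, 1)); that is, the inequality ‖tr(T)·T − T²‖ ≤ (√(n−1)/2)·|T|² is sharp. -/
/-!
For `T = diagonal d` the matrix `tr(T)·T − T²` is diagonal with entries `(∑ d)·dᵢ − dᵢ²`, and the
operator norm of a diagonal matrix is the largest modulus of its entries. For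
`d = (−√m, 1, …, 1)` with `m = n − 1` ones, `tr T = m − √m`; the first entry is `−m√m`, which
dominates the others `m − √m − 1`, while `|T|² = 2m`.
-/

open Matrix
open scoped Matrix.Norms.L2Operator

lemma pi_norm_eq_of_forall_le {ι E : Type*} [Fintype ι] [SeminormedAddCommGroup E]
    {f : ι → E} {c : ℝ} (hle : ∀ i, ‖f i‖ ≤ c) (i₀ : ι) (h₀ : ‖f i₀‖ = c) : ‖f‖ = c :=
  le_antisymm ((pi_norm_le_iff_of_nonneg (h₀ ▸ norm_nonneg _)).2 hle) (h₀ ▸ norm_le_pi_norm f i₀)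

namespace Matrix

variable {ι R : Type*} [Fintype ι] [DecidableEq ι] [CommRing R]

lemma trace_smul_sub_mul_self_diagonal (d : ι → R) :
    (diagonal d).trace • diagonal d - diagonal d * diagonal d =
      diagonal fun i ↦ (∑ j, d j) * d i - d i * d i := by
  rw [trace_diagonal, diagonal_mul_diagonal, ← diagonal_smul, ← diagonal_sub]
  rfl

lemma trace_diagonal_mul_transpose (d : ι → R) :
    (diagonal d * (diagonal d)ᵀ).trace = ∑ i, d i * d i := by
  rw [diagonal_transpose, diagonal_mul_diagonal, trace_diagonal]

end Matrix

noncomputable def sharpDiag (m : ℕ) : Fin (m + 1) → ℝ :=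
  Fin.cons (-√m) fun _ ↦ 1

lemma sum_sharpDiag (m : ℕ) : ∑ i, sharpDiag m i = m - √m := by
  simp [sharpDiag, Fin.sum_univ_succ]
  ring

lemma sum_mul_self_sharpDiag (m : ℕ) : ∑ i, sharpDiag m i * sharpDiag m i = 2 * m := by
  simp [sharpDiag, Fin.sum_univ_succ]
  ring

lemma norm_trace_mul_sub_mul_self_sharpDiag {m : ℕ} (hm : 1 ≤ m) :
    ‖fun i ↦ (m - √m) * sharpDiag m i - sharpDiag m i * sharpDiag m i‖ = m * √m := by
  have hs : 1 ≤ √(m : ℝ) := Real.one_le_sqrt.2 (by exact_mod_cast hm)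
  have hsq : √(m : ℝ) ^ 2 = m := Real.sq_sqrt (Nat.cast_nonneg m)
  have h₀ : ‖(m - √m) * sharpDiag m 0 - sharpDiag m 0 * sharpDiag m 0‖ = m * √(m : ℝ) := by
    rw [show (m - √m) * sharpDiag m 0 - sharpDiag m 0 * sharpDiag m 0 = -(m * √(m : ℝ)) by
        simp only [sharpDiag, Fin.cons_zero]; ring,
      norm_neg, Real.norm_of_nonneg (by positivity)]
  refine pi_norm_eq_of_forall_le (Fin.cases h₀.le fun _ ↦ ?_) 0 h₀
  simp only [sharpDiag, Fin.cons_succ, Real.norm_eq_abs, abs_le]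
  constructor <;> nlinarith

/-- For every integer `n ≥ 2` there exists a nonzero symmetric real
`n × n` matrix `T` for which equality `‖tr(T)·T − T²‖ = (√(n−1)/2)·|T|²` holds, where
`‖·‖` is the `ℓ² → ℓ²` operator norm and `|T|² = tr (T * Tᵀ)` is the squared Frobenius
norm; that is, the inequality `‖tr(T)·T − T²‖ ≤ (√(n−1)/2)·|T|²` is sharp. -/
theorem statement1 (n : ℕ) (hn : 2 ≤ n) :
    ∃ T : Matrix (Fin n) (Fin n) ℝ, T ≠ 0 ∧ T.IsSymm ∧
      ‖Matrix.toEuclideanCLM (𝕜 := ℝ) (T.trace • T - T * T)‖ =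
        (Real.sqrt ((n : ℝ) - 1) / 2) * (T * Tᵀ).trace := by
  obtain ⟨m, rfl⟩ : ∃ m, n = m + 1 := ⟨n - 1, by omega⟩
  refine ⟨diagonal (sharpDiag m), ?_, isSymm_diagonal _, ?_⟩
  · rw [Ne, diagonal_eq_zero, funext_iff, not_forall]
    exact ⟨0, by simp [sharpDiag]; omega⟩
  · rw [l2_opNorm_toEuclideanCLM, trace_smul_sub_mul_self_diagonal, l2_opNorm_diagonal,
      sum_sharpDiag, norm_trace_mul_sub_mul_self_sharpDiag (by omega),
      trace_diagonal_mul_transpose, sum_mul_self_sharpDiag, Nat.cast_succ, add_sub_cancel_right]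
    ring
end

section
/- Let k be an integer with 3 ≤ k ≤ 6 and let I_k denote the open interval ((k−2)/(k−1), 2/√(k−1)); define m(α,k) := min{ (4−(k−1)α²)/(k−α(k−1)), 4 − (4(k−2))/((k−1)α) } for α ∈ I_k. Then there exists α_*(k) ∈ I_k such that m(α,k) = 4 − (4(k−2))/((k−1)α) for all α ∈ ((k−2)/(k−1), α_*(k)], and m(α,k) = (4−(k−1)α²)/(k−α(k−1)) for all α ∈ [α_*(k), 2/√(k−1)); moreover the function α ↦ m(α,k) is monotone increasing on ((k−2)/(k−1), α_*(k)] and monotone decreasing on [α_*(k), 2/√(k−1)). -/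
/-!
Write `K = k - 1`. The difference of the two branches of the minimum is
`N(α) / (K α (k - K α))` for a cubic `N` which is strictly decreasing, positive at
`(k-2)/K`, nonnegative at `2/K` and negative at `2/√K` (these signs hold whenever `3 ≤ k`
and `(k - 4)² < 8`); its root `α_*` is the crossing point.
Left of `α_*` the minimum is the branch `4 - 4(k-2)/(Kα)`, increasing in `α`; right of it
the minimum is `(4 - Kα²)/(k - Kα)`, whose derivative has the sign of `(Kα - 2)(α - 2)`
and which is therefore decreasing on `[2/K, 2/√K) ∋ α_*`.
-/

/-- The function `m(α,k) = min{ (4−(k−1)α²)/(k−α(k−1)), 4 − (4(k−2))/((k−1)α) }`. -/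
noncomputable def mFun (k : ℕ) (α : ℝ) : ℝ :=
  min ((4 - ((k : ℝ) - 1) * α ^ 2) / ((k : ℝ) - α * ((k : ℝ) - 1)))
    (4 - (4 * ((k : ℝ) - 2)) / (((k : ℝ) - 1) * α))

open Set

noncomputable section

namespace CrossingBranches

def quadBranch (r α : ℝ) : ℝ :=
  (4 - (r - 1) * α ^ 2) / (r - α * (r - 1))

def hyperBranch (r α : ℝ) : ℝ :=
  4 - 4 * (r - 2) / ((r - 1) * α)

def crossingCubic (r α : ℝ) : ℝ :=
  -(r - 1) ^ 2 * α ^ 3 + 4 * (r - 1) ^ 2 * α ^ 2 + (4 - 8 * (r - 1)) * (r - 1) * α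
    + 4 * ((r - 1) ^ 2 - 1)

variable {r : ℝ}

lemma quadBranch_sub_hyperBranch {α : ℝ} (hr : r ≠ 1) (hα : α ≠ 0) (hd : r - α * (r - 1) ≠ 0) :
    quadBranch r α - hyperBranch r α = crossingCubic r α / ((r - 1) * α * (r - α * (r - 1))) := by
  have hr' : r - 1 ≠ 0 := sub_ne_zero.2 hr
  rw [eq_div_iff (mul_ne_zero (mul_ne_zero hr' hα) hd)]
  unfold quadBranch hyperBranch crossingCubic
  linear_combination ((r - 1) * α) * div_mul_cancel₀ (4 - (r - 1) * α ^ 2) hd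
    + (r - α * (r - 1)) * div_mul_cancel₀ (4 * (r - 2)) (mul_ne_zero hr' hα)

lemma continuous_crossingCubic (r : ℝ) : Continuous (crossingCubic r) := by
  unfold crossingCubic
  fun_prop

lemma strictAnti_crossingCubic (hr : 5 / 2 < r) : StrictAnti (crossingCubic r) := by
  intro x y hxy
  have hslope : -(r - 1) ^ 2 * (x ^ 2 + x * y + y ^ 2) + 4 * (r - 1) ^ 2 * (x + y)
      + (4 - 8 * (r - 1)) * (r - 1) < 0 := by
    nlinarith [sq_nonneg ((r - 1) * (x - y)), sq_nonneg ((r - 1) * (x + y - 8 / 3))]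
  have hdiff : crossingCubic r x - crossingCubic r y = (x - y) * (-(r - 1) ^ 2 *
      (x ^ 2 + x * y + y ^ 2) + 4 * (r - 1) ^ 2 * (x + y) + (4 - 8 * (r - 1)) * (r - 1)) := by
    unfold crossingCubic
    ring
  nlinarith [mul_pos_of_neg_of_neg (sub_neg.2 hxy) hslope]

lemma crossingCubic_sub_two_div_pos (hr : 2 < r) (hr' : (r - 4) ^ 2 < 8) :
    0 < crossingCubic r ((r - 2) / (r - 1)) := by
  have hK : 0 < r - 1 := by linarith
  have hval : crossingCubic r ((r - 2) / (r - 1)) = (r - 2) * (8 - (r - 4) ^ 2) / (r - 1) := by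
    unfold crossingCubic
    field_simp
    ring
  rw [hval]
  exact div_pos (mul_pos (by linarith) (by linarith)) hK

lemma crossingCubic_two_div_nonneg (hr : 3 ≤ r) : 0 ≤ crossingCubic r (2 / (r - 1)) := by
  have hK : 0 < r - 1 := by linarith
  have hval : crossingCubic r (2 / (r - 1)) = 4 * (r - 3) * (r - 2) ^ 2 / (r - 1) := by
    unfold crossingCubic
    field_simp
    ring
  rw [hval]
  exact div_nonneg (mul_nonneg (by linarith) (sq_nonneg _)) hK.le

lemma crossingCubic_two_div_sqrt_neg (hr : 2 < r) (hr' : (r - 4) ^ 2 < 8) :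
    crossingCubic r (2 / √(r - 1)) < 0 := by
  set s := √(r - 1)
  have hs2 : s ^ 2 = r - 1 := Real.sq_sqrt (by linarith)
  have hs1 : 1 < s := by nlinarith [Real.sqrt_nonneg (r - 1)]
  have hval : crossingCubic r (2 / s) = 4 * ((s - 1) ^ 2 * (s ^ 2 - 2 * s - 1)) := by
    unfold crossingCubic
    rw [← hs2]
    field_simp
    ring
  -- `(s² - 2s - 1)(s² + 2s - 1) = (r - 4)² - 8`
  have hneg : s ^ 2 - 2 * s - 1 < 0 := by
    nlinarith [mul_pos (by linarith : (0 : ℝ) < s - 1) (by linarith : (0 : ℝ) < s + 1)]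
  rw [hval]
  nlinarith [mul_neg_of_pos_of_neg (pow_pos (sub_pos.2 hs1) 2) hneg]

lemma two_div_le_two_div_sqrt (hr : 2 ≤ r) : 2 / (r - 1) ≤ 2 / √(r - 1) := by
  have hK : 1 ≤ r - 1 := by linarith
  gcongr
  calc √(r - 1) ≤ √(r - 1) * √(r - 1) := le_mul_of_one_le_left (Real.sqrt_nonneg _)
          (Real.one_le_sqrt.2 hK)
    _ = r - 1 := Real.mul_self_sqrt (by linarith)

lemma exists_crossingCubic_eq_zero (hr : 3 ≤ r) (hr' : (r - 4) ^ 2 < 8) :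
    ∃ αs, (r - 2) / (r - 1) < αs ∧ 2 / (r - 1) ≤ αs ∧ αs < 2 / √(r - 1) ∧
      crossingCubic r αs = 0 := by
  obtain ⟨αs, ⟨hlo, hhi⟩, hroot⟩ :=
    intermediate_value_Ico' (two_div_le_two_div_sqrt (by linarith))
      (continuous_crossingCubic r).continuousOn
      ⟨crossingCubic_two_div_sqrt_neg (by linarith) hr', crossingCubic_two_div_nonneg hr⟩
  refine ⟨αs, ?_, hlo, hhi, hroot⟩
  by_contra! hle
  have := (strictAnti_crossingCubic (r := r) (by linarith)).antitone hle
  linarith [crossingCubic_sub_two_div_pos (by linarith) hr']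

lemma sub_mul_pos_of_lt_two_div_sqrt {α : ℝ} (hr : 1 < r) (hα : α < 2 / √(r - 1)) :
    0 < r - α * (r - 1) := by
  set s := √(r - 1)
  have hs0 : 0 < s := Real.sqrt_pos.2 (by linarith)
  have hs2 : s ^ 2 = r - 1 := Real.sq_sqrt (by linarith)
  have h2s : 2 / s * (r - 1) = 2 * s := by
    rw [← hs2]
    field_simp
  nlinarith [mul_lt_mul_of_pos_right hα (by linarith : 0 < r - 1), sq_nonneg (s - 1)]

section Branches

variable {α : ℝ} (hr : 1 < r) (hα : 0 < α) (hα' : α < 2 / √(r - 1))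
include hr hα hα'

lemma branch_diff_denom_pos : 0 < (r - 1) * α * (r - α * (r - 1)) :=
  mul_pos (mul_pos (by linarith) hα) (sub_mul_pos_of_lt_two_div_sqrt hr hα')

lemma hyperBranch_le_quadBranch (hN : 0 ≤ crossingCubic r α) :
    hyperBranch r α ≤ quadBranch r α := by
  have hdiff := quadBranch_sub_hyperBranch hr.ne' hα.ne'
    (sub_mul_pos_of_lt_two_div_sqrt hr hα').ne'
  have := div_nonneg hN (branch_diff_denom_pos hr hα hα').le
  linarith

lemma quadBranch_le_hyperBranch (hN : crossingCubic r α ≤ 0) :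
    quadBranch r α ≤ hyperBranch r α := by
  have hdiff := quadBranch_sub_hyperBranch hr.ne' hα.ne'
    (sub_mul_pos_of_lt_two_div_sqrt hr hα').ne'
  have := div_nonpos_of_nonpos_of_nonneg hN (branch_diff_denom_pos hr hα hα').le
  linarith

end Branches

lemma hyperBranch_monotoneOn (hr : 2 ≤ r) : MonotoneOn (hyperBranch r) (Ioi 0) := by
  intro x hx y _ hxy
  unfold hyperBranch
  have hx' : 0 < (r - 1) * x := mul_pos (by linarith) hx
  have : 4 * (r - 2) / ((r - 1) * y) ≤ 4 * (r - 2) / ((r - 1) * x) := by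
    gcongr
    linarith
  linarith

lemma quadBranch_antitoneOn (hr : 2 ≤ r) :
    AntitoneOn (quadBranch r) (Ico (2 / (r - 1)) (2 / √(r - 1))) := by
  intro x ⟨hx, hx'⟩ y ⟨_, hy'⟩ hxy
  have hK : 0 < r - 1 := by linarith
  have hdx := sub_mul_pos_of_lt_two_div_sqrt (by linarith) hx'
  have hdy := sub_mul_pos_of_lt_two_div_sqrt (by linarith) hy'
  have hKx : 2 ≤ (r - 1) * x := by
    rwa [div_le_iff₀ hK, mul_comm] at hx
  have hy2 : y ≤ 2 := by
    have : √(r - 1) ≥ 1 := Real.one_le_sqrt.2 (by linarith)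
    have : 2 / √(r - 1) ≤ 2 := div_le_self (by norm_num) this
    linarith
  unfold quadBranch
  rw [div_le_div_iff₀ hdy hdx]
  -- the cross-multiplied difference is `K (y - x) ((K x - 2)(2 - y) + (K - 1)(y - x))`
  nlinarith [mul_nonneg (mul_nonneg (mul_nonneg hK.le (sub_nonneg.2 hxy))
      (sub_nonneg.2 hKx)) (sub_nonneg.2 hy2),
    mul_nonneg (mul_nonneg hK.le (by linarith : (0 : ℝ) ≤ r - 2)) (sq_nonneg (x - y))]

end CrossingBranches

end

open CrossingBranches in
/-- For every integer `3 ≤ k ≤ 6` there is `α_*(k)` in the open interval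
`((k−2)/(k−1), 2/√(k−1))` such that on `((k−2)/(k−1), α_*(k)]` the minimum `m(α,k)` equals
`4 − 4(k−2)/((k−1)α)`, on `[α_*(k), 2/√(k−1))` it equals `(4−(k−1)α²)/(k−α(k−1))`, and
`α ↦ m(α,k)` is monotone increasing on the first interval and monotone decreasing on the
second. -/
theorem statement2 (k : ℕ) (hk3 : 3 ≤ k) (hk6 : k ≤ 6) :
    ∃ αs : ℝ,
      αs ∈ Set.Ioo (((k : ℝ) - 2) / ((k : ℝ) - 1)) (2 / Real.sqrt ((k : ℝ) - 1)) ∧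
      (∀ α ∈ Set.Ioc (((k : ℝ) - 2) / ((k : ℝ) - 1)) αs,
        mFun k α = 4 - (4 * ((k : ℝ) - 2)) / (((k : ℝ) - 1) * α)) ∧
      (∀ α ∈ Set.Ico αs (2 / Real.sqrt ((k : ℝ) - 1)),
        mFun k α = (4 - ((k : ℝ) - 1) * α ^ 2) / ((k : ℝ) - α * ((k : ℝ) - 1))) ∧
      MonotoneOn (mFun k) (Set.Ioc (((k : ℝ) - 2) / ((k : ℝ) - 1)) αs) ∧
      AntitoneOn (mFun k) (Set.Ico αs (2 / Real.sqrt ((k : ℝ) - 1))) := by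
  have hk3' : (3 : ℝ) ≤ k := by exact_mod_cast hk3
  have hk6' : (k : ℝ) ≤ 6 := by exact_mod_cast hk6
  have hlo_pos : 0 < ((k : ℝ) - 2) / ((k : ℝ) - 1) := div_pos (by linarith) (by linarith)
  obtain ⟨αs, hlo, htwo, hhi, hroot⟩ := exists_crossingCubic_eq_zero hk3' (by nlinarith)
  have hanti := (strictAnti_crossingCubic (r := k) (by linarith)).antitone
  have hleft : EqOn (mFun k) (hyperBranch k) (Ioc (((k : ℝ) - 2) / ((k : ℝ) - 1)) αs) :=
    fun α ⟨hα, hα'⟩ ↦ min_eq_right <| hyperBranch_le_quadBranch (by linarith)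
      (hlo_pos.trans hα) (hα'.trans_lt hhi) (hroot ▸ hanti hα')
  have hright : EqOn (mFun k) (quadBranch k) (Ico αs (2 / √((k : ℝ) - 1))) :=
    fun α ⟨hα, hα'⟩ ↦ min_eq_left <| quadBranch_le_hyperBranch (by linarith)
      (by linarith) hα' (hroot ▸ hanti hα)
  refine ⟨αs, ⟨hlo, hhi⟩, hleft, hright, ?_, ?_⟩
  · exact ((hyperBranch_monotoneOn (by linarith)).mono
      fun α hα ↦ hlo_pos.trans hα.1).congr hleft.symm
  · exact ((quadBranch_antitoneOn (by linarith)).mono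
      (Ico_subset_Ico_left htwo)).congr hright.symm
end

section
/- Let a > 0 and let γ : [0,a] → ℝⁿ be a twice continuously differentiable closed curve (γ(0) = γ(a)) parametrized by arclength, i.e. |γ'(t)| = 1 for all t ∈ [0,a]. Then the total curvature of γ satisfies ∫₀ᵃ |γ''(t)| dt ≥ π/2. -/
/-!
The unit tangent `T = γ'` integrates to `γ a - γ 0 = 0`, so `⟪T t, T 0⟫ ≤ 0` at some time: on the
unit sphere, `T` travels from `T 0` to the closed hemisphere opposite it, a spherical distance at
least `π / 2`. The length `∫ ‖γ''‖` of this path bounds that distance, because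
`|d/dt arccos ⟪T, e⟫| ≤ ‖T'‖` wherever `⟪T, e⟫ ≠ ±1`; the first time `⟪T, T 0⟫ ≤ 0` and
the last time before it that `⟪T, T 0⟫ = 1` delimit an interval on which this holds.
-/

open Set Real MeasureTheory Filter Topology
open scoped RealInnerProductSpace

theorem exists_mem_Ioo_nonpos_of_integral_nonpos {f : ℝ → ℝ} {a b : ℝ} (hab : a < b)
    (hf : IntervalIntegrable f volume a b) (h : ∫ x in a..b, f x ≤ 0) :
    ∃ x ∈ Ioo a b, f x ≤ 0 := by
  by_contra! hpos
  exact h.not_gt (intervalIntegral.intervalIntegral_pos_of_pos_on hf hpos hab)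

/-- Take `t` the first time `f ≤ p`, and `s` the last time before `t` that `q ≤ f`. -/
theorem exists_Ioo_mapsTo_Ioo {f : ℝ → ℝ} {a b p q c : ℝ} (hf : ContinuousOn f (Icc a b))
    (hpq : p < q) (ha : q ≤ f a) (hc : c ∈ Icc a b) (hfc : f c ≤ p) :
    ∃ s t, a ≤ s ∧ s < t ∧ t ≤ b ∧ q ≤ f s ∧ f t ≤ p ∧ MapsTo f (Ioo s t) (Ioo p q) := by
  set S := Icc a b ∩ f ⁻¹' Iic p
  have hSbdd : BddBelow S := ⟨a, fun x hx => hx.1.1⟩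
  have htS : sInf S ∈ S :=
    (hf.preimage_isClosed_of_isClosed isClosed_Icc isClosed_Iic).csInf_mem ⟨c, hc, hfc⟩ hSbdd
  set t := sInf S
  have hat : a ≤ t := htS.1.1
  set T := Icc a t ∩ f ⁻¹' Ici q
  have hTbdd : BddAbove T := ⟨t, fun x hx => hx.1.2⟩
  have hsT : sSup T ∈ T :=
    ((hf.mono (Icc_subset_Icc_right htS.1.2)).preimage_isClosed_of_isClosed isClosed_Icc
      isClosed_Ici).csSup_mem ⟨a, ⟨le_rfl, hat⟩, ha⟩ hTbdd
  set s := sSup T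
  have hst : s < t := hsT.1.2.lt_of_ne fun h => by
    have : q ≤ p := (h ▸ hsT.2 : q ≤ f t).trans htS.2
    linarith
  refine ⟨s, t, hsT.1.1, hst, htS.1.2, hsT.2, htS.2, fun x hx => ⟨?_, ?_⟩⟩
  · by_contra! hxp
    exact hx.2.not_ge (csInf_le hSbdd ⟨⟨hsT.1.1.trans hx.1.le, hx.2.le.trans htS.1.2⟩, hxp⟩)
  · by_contra! hqx
    exact hx.1.not_ge (le_csSup hTbdd ⟨⟨hsT.1.1.trans hx.1.le, hx.2.le⟩, hqx⟩)

section InnerProductSpace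

variable {E : Type*} [NormedAddCommGroup E] [InnerProductSpace ℝ E]

theorem inner_deriv_eq_zero_of_eventually_norm_eq {u : ℝ → E} {u' : E} {x r : ℝ}
    (hu : HasDerivAt u u' x) (hr : ∀ᶠ y in 𝓝 x, ‖u y‖ = r) : ⟪u x, u'⟫ = 0 := by
  have hconst : HasDerivAt (‖u ·‖ ^ 2) 0 x :=
    (hasDerivAt_const x (r ^ 2)).congr_of_eventuallyEq (hr.mono fun y hy => by simp only [hy])
  linarith [hu.norm_sq.unique hconst]

theorem abs_inner_le_norm_mul_sqrt_one_sub_sq {v e w : E} (hv : ‖v‖ = 1) (he : ‖e‖ = 1)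
    (hw : ⟪w, v⟫ = 0) : |⟪w, e⟫| ≤ ‖w‖ * √(1 - ⟪v, e⟫ ^ 2) := by
  have hproj : ⟪w, e⟫ = ⟪w, e - ⟪v, e⟫ • v⟫ := by
    rw [inner_sub_right, real_inner_smul_right, hw, mul_zero, sub_zero]
  have hnorm : ‖e - ⟪v, e⟫ • v‖ ^ 2 = 1 - ⟪v, e⟫ ^ 2 := by
    rw [norm_sub_sq_real, real_inner_smul_right, norm_smul, hv, he, real_inner_comm e v,
      norm_eq_abs, mul_one, sq_abs]
    ring
  rw [hproj, ← hnorm, sqrt_sq (norm_nonneg _)]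
  exact abs_real_inner_le_norm _ _

theorem hasDerivAt_arccos_inner {u : ℝ → E} {u' e : E} {x : ℝ} (hu : HasDerivAt u u' x)
    (h₁ : ⟪u x, e⟫ ≠ -1) (h₂ : ⟪u x, e⟫ ≠ 1) :
    HasDerivAt (fun y => arccos ⟪u y, e⟫) (-⟪u', e⟫ / √(1 - ⟪u x, e⟫ ^ 2)) x := by
  have h := (hasDerivAt_arccos h₁ h₂).comp x (hu.inner ℝ (hasDerivAt_const x e))
  rw [inner_zero_right, zero_add, neg_mul, one_div_mul_eq_div, ← neg_div] at h
  exact h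

theorem neg_inner_div_sqrt_le_norm {v e w : E} (hv : ‖v‖ = 1) (he : ‖e‖ = 1)
    (hw : ⟪w, v⟫ = 0) (h : ⟪v, e⟫ ∈ Ioo (-1) 1) :
    -⟪w, e⟫ / √(1 - ⟪v, e⟫ ^ 2) ≤ ‖w‖ := by
  have hpos : 0 < √(1 - ⟪v, e⟫ ^ 2) := sqrt_pos.2 (by nlinarith [h.1, h.2])
  rw [div_le_iff₀ hpos]
  linarith [neg_abs_le ⟪w, e⟫, abs_inner_le_norm_mul_sqrt_one_sub_sq hv he hw]

theorem arccos_inner_sub_arccos_inner_le_integral_norm_deriv {u u' : ℝ → E} {e : E} {s t : ℝ}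
    (hst : s ≤ t) (hcont : ContinuousOn u (Icc s t))
    (hderiv : ∀ x ∈ Ioo s t, HasDerivAt u (u' x) x) (hunit : ∀ x ∈ Ioo s t, ‖u x‖ = 1)
    (he : ‖e‖ = 1) (hinner : ∀ x ∈ Ioo s t, ⟪u x, e⟫ ∈ Ioo (-1) 1)
    (hint : IntegrableOn (fun x => ‖u' x‖) (Icc s t)) :
    arccos ⟪u t, e⟫ - arccos ⟪u s, e⟫ ≤ ∫ x in s..t, ‖u' x‖ := by
  refine intervalIntegral.sub_le_integral_of_hasDeriv_right_of_le hst
    (continuous_arccos.comp_continuousOn (hcont.inner continuousOn_const))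
    (fun x hx => (hasDerivAt_arccos_inner (hderiv x hx) (hinner x hx).1.ne'
      (hinner x hx).2.ne).hasDerivWithinAt) hint fun x hx => ?_
  have hortho : ⟪u' x, u x⟫ = 0 := by
    rw [real_inner_comm]
    exact inner_deriv_eq_zero_of_eventually_norm_eq (hderiv x hx)
      (eventually_of_mem (isOpen_Ioo.mem_nhds hx) hunit)
  exact neg_inner_div_sqrt_le_norm (hunit x hx) he hortho (hinner x hx)


theorem exists_inner_deriv_nonpos_of_eq {γ γ' : ℝ → E} {a b : ℝ} (hab : a < b)
    (hderiv : ∀ t ∈ Icc a b, HasDerivWithinAt γ (γ' t) (Icc a b) t)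
    (hcont : ContinuousOn γ' (Icc a b)) (hclosed : γ a = γ b) (e : E) :
    ∃ t ∈ Icc a b, ⟪γ' t, e⟫ ≤ 0 := by
  have hinner : ContinuousOn (fun t => ⟪γ' t, e⟫) (Icc a b) := hcont.inner continuousOn_const
  have hftc : ∫ t in a..b, ⟪γ' t, e⟫ = ⟪γ b, e⟫ - ⟪γ a, e⟫ := by
    refine intervalIntegral.integral_eq_sub_of_hasDerivAt_of_le hab.le
      (fun t ht => ((hderiv t ht).inner ℝ (hasDerivWithinAt_const t _ e)).continuousWithinAt)
      (fun t ht => ?_) (hinner.intervalIntegrable_of_Icc hab.le)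
    simpa using ((hderiv t (Ioo_subset_Icc_self ht)).inner ℝ
      (hasDerivWithinAt_const t _ e)).hasDerivAt (Icc_mem_nhds ht.1 ht.2)
  obtain ⟨t, ht, hle⟩ := exists_mem_Ioo_nonpos_of_integral_nonpos hab
    (hinner.intervalIntegrable_of_Icc hab.le) (by rw [hftc, hclosed, sub_self])
  exact ⟨t, Ioo_subset_Icc_self ht, hle⟩

end InnerProductSpace

/-- Let `a > 0` and let `γ : [0,a] → ℝⁿ` be a twice continuously
differentiable closed curve (`γ(0) = γ(a)`) parametrized by arclength (`|γ'(t)| = 1`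
for all `t ∈ [0,a]`). Then the total curvature satisfies `∫₀ᵃ |γ''(t)| dt ≥ π/2`. -/
theorem statement15 (n : ℕ) (a : ℝ) (ha : 0 < a)
    (γ γ' γ'' : ℝ → EuclideanSpace ℝ (Fin n))
    (hderiv1 : ∀ t ∈ Set.Icc (0 : ℝ) a, HasDerivWithinAt γ (γ' t) (Set.Icc (0 : ℝ) a) t)
    (hderiv2 : ∀ t ∈ Set.Icc (0 : ℝ) a, HasDerivWithinAt γ' (γ'' t) (Set.Icc (0 : ℝ) a) t)
    (hcont : ContinuousOn γ'' (Set.Icc (0 : ℝ) a))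
    (hunit : ∀ t ∈ Set.Icc (0 : ℝ) a, ‖γ' t‖ = 1)
    (hclosed : γ 0 = γ a) :
    ∫ t in (0 : ℝ)..a, ‖γ'' t‖ ≥ Real.pi / 2 := by
  have h0 : (0 : ℝ) ∈ Icc 0 a := ⟨le_rfl, ha.le⟩
  have hγ' : ContinuousOn γ' (Icc 0 a) := fun t ht => (hderiv2 t ht).continuousWithinAt
  obtain ⟨c, hc, hfc⟩ := exists_inner_deriv_nonpos_of_eq ha hderiv1 hγ' hclosed (γ' 0)
  have hf0 : 1 ≤ ⟪γ' 0, γ' 0⟫ := by rw [real_inner_self_eq_norm_sq, hunit 0 h0, one_pow]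
  obtain ⟨s, t, hs, hst, ht, hfs, hft, hmaps⟩ :=
    exists_Ioo_mapsTo_Ioo (hγ'.inner continuousOn_const) zero_lt_one hf0 hc hfc
  have hIcc : Icc s t ⊆ Icc 0 a := Icc_subset_Icc hs ht
  have hIoo : Ioo s t ⊆ Ioo 0 a := Ioo_subset_Ioo hs ht
  have hlength := arccos_inner_sub_arccos_inner_le_integral_norm_deriv hst.le (hγ'.mono hIcc)
    (fun x hx => (hderiv2 x (Ioo_subset_Icc_self (hIoo hx))).hasDerivAt
      (Icc_mem_nhds (hIoo hx).1 (hIoo hx).2))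
    (fun x hx => hunit x (hIcc (Ioo_subset_Icc_self hx))) (hunit 0 h0)
    (fun x hx => Ioo_subset_Ioo_left (by norm_num) (hmaps hx))
    ((hcont.norm.mono hIcc).integrableOn_Icc)
  have hangle : π / 2 ≤ arccos ⟪γ' t, γ' 0⟫ := by
    rw [← not_lt, arccos_lt_pi_div_two, not_lt]; exact hft
  have hmono : ∫ x in s..t, ‖γ'' x‖ ≤ ∫ x in (0 : ℝ)..a, ‖γ'' x‖ :=
    intervalIntegral.integral_mono_interval hs hst.le ht
      (Eventually.of_forall fun _ => norm_nonneg _)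
      (hcont.norm.intervalIntegrable_of_Icc ha.le)
  rw [arccos_of_one_le hfs, sub_zero] at hlength
  linarith
end

section
/- Let A be a symmetric real 5×5 matrix with trace zero and let γ be a real number with γ ≥ 4/5. Then γ·Σ_{i,j} aᵢⱼ² − Σᵢ aᵢ₁² ≥ 0, where aᵢⱼ denotes the (i,j) entry of A; equivalently, γ·|A|² ≥ |A·e₁|², where |A| is the Frobenius norm of A, e₁ is the first standard basis vector of ℝ⁵, and |A·e₁| is the Euclidean norm of the vector A·e₁. -/
set_option maxHeartbeats 2000000

/-- Let `A` be a symmetric traceless real `5 × 5` matrix and let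
`γ ≥ 4/5`. Then `γ·Σ_{i,j} aᵢⱼ² − Σᵢ aᵢ₁² ≥ 0`, i.e. `γ·|A|² ≥ |A·e₁|²` where `|A|` is
the Frobenius norm and `e₁` the first standard basis vector of `ℝ⁵`. -/
theorem statement18 (A : Matrix (Fin 5) (Fin 5) ℝ) (hA : A.IsSymm) (htr : A.trace = 0)
    (γ : ℝ) (hγ : 4 / 5 ≤ γ) :
    γ * ∑ i, ∑ j, A i j ^ 2 - ∑ i, A i 0 ^ 2 ≥ 0 := by
  have hs : ∀ i j, A i j = A j i := fun i j => (hA.apply i j).symm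
  simp only [Matrix.trace, Matrix.diag, Fin.sum_univ_five] at htr
  simp only [Fin.sum_univ_five]
  rw [hs 0 1, hs 0 2, hs 0 3, hs 0 4, hs 1 2, hs 1 3, hs 1 4, hs 2 3, hs 2 4, hs 3 4]
  have ha00 : A 0 0 = -(A 1 1 + A 2 2 + A 3 3 + A 4 4) := by linarith
  rw [ha00]
  obtain ⟨S, hSdef⟩ : ∃ S : ℝ, S = (-(A 1 1 + A 2 2 + A 3 3 + A 4 4)) ^ 2 + A 1 0 ^ 2 + A 2 0 ^ 2 + A 3 0 ^ 2 + A 4 0 ^ 2 +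
      (A 1 0 ^ 2 + A 1 1 ^ 2 + A 2 1 ^ 2 + A 3 1 ^ 2 + A 4 1 ^ 2) +
      (A 2 0 ^ 2 + A 2 1 ^ 2 + A 2 2 ^ 2 + A 3 2 ^ 2 + A 4 2 ^ 2) +
      (A 3 0 ^ 2 + A 3 1 ^ 2 + A 3 2 ^ 2 + A 3 3 ^ 2 + A 4 3 ^ 2) +
      (A 4 0 ^ 2 + A 4 1 ^ 2 + A 4 2 ^ 2 + A 4 3 ^ 2 + A 4 4 ^ 2) := ⟨_, rfl⟩
  rw [← hSdef]
  have hS : (0:ℝ) ≤ S := by rw [hSdef]; positivity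
  have key : (-(A 1 1 + A 2 2 + A 3 3 + A 4 4)) ^ 2 + A 1 0 ^ 2 + A 2 0 ^ 2 + A 3 0 ^ 2 + A 4 0 ^ 2
      ≤ 4 / 5 * S := by
    rw [hSdef]
    nlinarith [sq_nonneg (A 1 1 - A 2 2), sq_nonneg (A 1 1 - A 3 3), sq_nonneg (A 1 1 - A 4 4),
      sq_nonneg (A 2 2 - A 3 3), sq_nonneg (A 2 2 - A 4 4), sq_nonneg (A 3 3 - A 4 4),
      sq_nonneg (A 1 0), sq_nonneg (A 2 0), sq_nonneg (A 3 0), sq_nonneg (A 4 0),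
      sq_nonneg (A 2 1), sq_nonneg (A 3 1), sq_nonneg (A 4 1), sq_nonneg (A 3 2),
      sq_nonneg (A 4 2), sq_nonneg (A 4 3)]
  have hmul : 4 / 5 * S ≤ γ * S := mul_le_mul_of_nonneg_right hγ hS
  linarith
end

section
/- Let a = 11/10 and α = 40/43. There exists a real number θ > 0 such that for every real number H and every symmetric traceless real 5×5 matrix Φ the following inequality holds: a·(H²/5 + Σ_{i,j} Φᵢⱼ²) + (1/5 − 1/25 + α/5 − 2α/25)·H² − Φ₁₁² − α·Φ₂₂² + (1 − 2/5 − α/5)·H·Φ₁₁ + α·(1 − 3/5)·H·Φ₂₂ − α·Φ₁₁·Φ₂₂ − Σ_{i=2}^{5} Φ₁ᵢ² − α·Σ_{i=3}^{5} Φ₂ᵢ² ≥ θ·H². -/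
/-- Let `a = 11/10` and `α = 40/43`. There exists `θ > 0` such that
for every real `H` and every symmetric traceless real `5 × 5` matrix `Φ`:
`a(H²/5 + Σ_{i,j} Φᵢⱼ²) + (1/5 − 1/25 + α/5 − 2α/25)H² − Φ₁₁² − αΦ₂₂²
 + (1 − 2/5 − α/5)HΦ₁₁ + α(1 − 3/5)HΦ₂₂ − αΦ₁₁Φ₂₂ − Σ_{i=2}^{5} Φ₁ᵢ²
 − αΣ_{i=3}^{5} Φ₂ᵢ² ≥ θH²`. -/
theorem statement19 :
    ∃ θ : ℝ, 0 < θ ∧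
      ∀ (H : ℝ) (Φ : Matrix (Fin 5) (Fin 5) ℝ), Φ.IsSymm → Φ.trace = 0 →
        (11 / 10) * (H ^ 2 / 5 + ∑ i, ∑ j, Φ i j ^ 2)
          + (1 / 5 - 1 / 25 + (40 / 43) / 5 - 2 * (40 / 43) / 25) * H ^ 2
          - Φ 0 0 ^ 2 - (40 / 43) * Φ 1 1 ^ 2
          + (1 - 2 / 5 - (40 / 43) / 5) * H * Φ 0 0
          + (40 / 43) * (1 - 3 / 5) * H * Φ 1 1
          - (40 / 43) * Φ 0 0 * Φ 1 1
          - (Φ 0 1 ^ 2 + Φ 0 2 ^ 2 + Φ 0 3 ^ 2 + Φ 0 4 ^ 2)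
          - (40 / 43) * (Φ 1 2 ^ 2 + Φ 1 3 ^ 2 + Φ 1 4 ^ 2)
        ≥ θ * H ^ 2 := by
  refine ⟨1/100, by norm_num, ?_⟩
  intro H Φ hs ht
  simp only [Matrix.trace, Matrix.diag, Fin.sum_univ_five] at ht
  simp only [Fin.sum_univ_five]
  rw [hs.apply 0 1, hs.apply 0 2, hs.apply 0 3, hs.apply 0 4,
      hs.apply 1 2, hs.apply 1 3, hs.apply 1 4,
      hs.apply 2 3, hs.apply 2 4, hs.apply 3 4]
  have h1 : Φ 2 2 ^ 2 + Φ 3 3 ^ 2 + Φ 4 4 ^ 2 ≥ (Φ 0 0 + Φ 1 1) ^ 2 / 3 := by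
    nlinarith [sq_nonneg (Φ 2 2 - Φ 3 3), sq_nonneg (Φ 2 2 - Φ 4 4), sq_nonneg (Φ 3 3 - Φ 4 4), sq_nonneg (Φ 0 0 + Φ 1 1 + Φ 2 2 + Φ 3 3 + Φ 4 4), ht, mul_self_eq_zero.mpr ht]
  nlinarith [sq_nonneg (2071*H + 890*(Φ 0 0) + 800*(Φ 1 1)),
    sq_nonneg (1009112*(Φ 0 0) - 476617*(Φ 1 1)), sq_nonneg (Φ 1 1),
    h1, sq_nonneg (Φ 0 1), sq_nonneg (Φ 0 2), sq_nonneg (Φ 0 3), sq_nonneg (Φ 0 4),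
    sq_nonneg (Φ 1 2), sq_nonneg (Φ 1 3), sq_nonneg (Φ 1 4),
    sq_nonneg (Φ 2 3), sq_nonneg (Φ 2 4), sq_nonneg (Φ 3 4)]
end
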